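/- arXiv:2503.15452 — 3 statements merged into one kernel-verified Lean document; each statement's English description precedes it below -/
import Mathlib

section
/- The subring of ℂ generated by the two elements 1/√2 and i is exactly the set {a + b·i + c·√2 + d·i·√2 : a, b, c, d ∈ 𝔻}, where 𝔻 denotes the ring of dyadic rationals. In other words, ℤ[1/√2, i] = {a + b·i + c·√2 + d·i·√2 : a, b, c, d ∈ 𝔻}. -/
/-- A real number is a dyadic rational if it equals `m / 2 ^ k` for some `m : ℤ`, `k : ℕ`. -/
def IsDyadic (x : ℝ) : Prop := ∃ (m : ℤ) (k : ℕ), x = (m : ℝ) / 2 ^ k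

/-!
The set on the right is `𝔻 + 𝔻 i + 𝔻 √2 + 𝔻 i √2`. Since `i² = -1` and `√2² = 2` lie in `𝔻`, it is
closed under multiplication, hence a subring; it contains `1/√2 = √2 / 2` and `i`, so it contains the
closure. Conversely the closure contains `1/2 = (1/√2)²`, hence all of `𝔻`, as well as `√2 = 2 · (1/√2)`
and `i`.
-/

lemma IsDyadic.add {x y : ℝ} (hx : IsDyadic x) (hy : IsDyadic y) : IsDyadic (x + y) := by
  obtain ⟨m, k, rfl⟩ := hx
  obtain ⟨n, l, rfl⟩ := hy
  refine ⟨m * 2 ^ l + n * 2 ^ k, k + l, ?_⟩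
  field_simp
  push_cast
  ring

lemma IsDyadic.mul {x y : ℝ} (hx : IsDyadic x) (hy : IsDyadic y) : IsDyadic (x * y) := by
  obtain ⟨m, k, rfl⟩ := hx
  obtain ⟨n, l, rfl⟩ := hy
  exact ⟨m * n, k + l, by push_cast; rw [div_mul_div_comm, pow_add]⟩

lemma IsDyadic.neg {x : ℝ} (hx : IsDyadic x) : IsDyadic (-x) := by
  obtain ⟨m, k, rfl⟩ := hx
  exact ⟨-m, k, by push_cast; ring⟩

def dyadicSubring : Subring ℝ where
  carrier := {x | IsDyadic x}
  add_mem' := IsDyadic.add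
  mul_mem' := IsDyadic.mul
  neg_mem' := IsDyadic.neg
  zero_mem' := ⟨0, 0, by norm_num⟩
  one_mem' := ⟨1, 0, by norm_num⟩

lemma inv_two_mem_dyadicSubring : (2⁻¹ : ℝ) ∈ dyadicSubring := ⟨1, 1, by norm_num⟩

lemma dyadicSubring_le_comap {A : Type*} [Ring A] (f : ℝ →+* A) {T : Subring A}
    (h : f 2⁻¹ ∈ T) : dyadicSubring ≤ T.comap f := by
  rintro _ ⟨m, k, rfl⟩
  rw [Subring.mem_comap, div_eq_mul_inv, ← inv_pow, map_mul, map_pow, map_intCast]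
  exact T.mul_mem (intCast_mem T m) (T.pow_mem h k)

section BiquadraticSpan

variable {K A : Type*} [CommRing K] [CommRing A] (f : K →+* A) (R : Subring K) (s t : A)

def biquadraticSpan : Set A :=
  {z | ∃ a b c d : K, a ∈ R ∧ b ∈ R ∧ c ∈ R ∧ d ∈ R ∧
    z = f a + f b * t + f c * s + f d * t * s}

variable {f R s t}

lemma coeff_mem_biquadraticSpan {a b c d : K} (ha : a ∈ R) (hb : b ∈ R) (hc : c ∈ R) (hd : d ∈ R) :
    f a + f b * t + f c * s + f d * t * s ∈ biquadraticSpan f R s t :=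
  ⟨a, b, c, d, ha, hb, hc, hd, rfl⟩

lemma map_mem_biquadraticSpan {a : K} (ha : a ∈ R) : f a ∈ biquadraticSpan f R s t := by
  convert coeff_mem_biquadraticSpan ha R.zero_mem R.zero_mem R.zero_mem using 1
  simp

lemma map_mul_fst_mem_biquadraticSpan {c : K} (hc : c ∈ R) :
    f c * s ∈ biquadraticSpan f R s t := by
  convert coeff_mem_biquadraticSpan R.zero_mem R.zero_mem hc R.zero_mem using 1
  simp

lemma snd_mem_biquadraticSpan : t ∈ biquadraticSpan f R s t := by
  convert coeff_mem_biquadraticSpan R.zero_mem R.one_mem R.zero_mem R.zero_mem using 1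
  simp

lemma add_mem_biquadraticSpan {x y : A} (hx : x ∈ biquadraticSpan f R s t)
    (hy : y ∈ biquadraticSpan f R s t) : x + y ∈ biquadraticSpan f R s t := by
  obtain ⟨a, b, c, d, ha, hb, hc, hd, rfl⟩ := hx
  obtain ⟨a', b', c', d', ha', hb', hc', hd', rfl⟩ := hy
  convert coeff_mem_biquadraticSpan (R.add_mem ha ha') (R.add_mem hb hb') (R.add_mem hc hc')
    (R.add_mem hd hd') using 1
  simp only [map_add]
  ring

lemma neg_mem_biquadraticSpan {x : A} (hx : x ∈ biquadraticSpan f R s t) :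
    -x ∈ biquadraticSpan f R s t := by
  obtain ⟨a, b, c, d, ha, hb, hc, hd, rfl⟩ := hx
  convert coeff_mem_biquadraticSpan (R.neg_mem ha) (R.neg_mem hb) (R.neg_mem hc)
    (R.neg_mem hd) using 1
  simp only [map_neg]
  ring

lemma mul_mem_biquadraticSpan {p q : K} (hp : p ∈ R) (hq : q ∈ R) (hs : s * s = f p)
    (ht : t * t = f q) {x y : A} (hx : x ∈ biquadraticSpan f R s t)
    (hy : y ∈ biquadraticSpan f R s t) : x * y ∈ biquadraticSpan f R s t := by
  obtain ⟨a, b, c, d, ha, hb, hc, hd, rfl⟩ := hx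
  obtain ⟨a', b', c', d', ha', hb', hc', hd', rfl⟩ := hy
  convert coeff_mem_biquadraticSpan (f := f) (s := s) (t := t)
    (a := a * a' + q * (b * b') + p * (c * c') + p * q * (d * d'))
    (b := a * b' + b * a' + p * (c * d' + d * c'))
    (c := a * c' + c * a' + q * (b * d' + d * b'))
    (d := a * d' + d * a' + b * c' + c * b') ?_ ?_ ?_ ?_ using 1
  · simp only [map_add, map_mul]
    linear_combination (f c * f c' + (f c * f d' + f d * f c') * t + f d * f d' * t * t) * hs +
      (f b * f b' + (f b * f d' + f d * f b') * s + f d * f d' * f p) * ht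
  all_goals repeat first | refine R.add_mem ?_ ?_ | refine R.mul_mem ?_ ?_ | assumption

lemma closure_subset_biquadraticSpan {p q : K} (hp : p ∈ R) (hq : q ∈ R) (hs : s * s = f p)
    (ht : t * t = f q) {S : Set A} (hS : S ⊆ biquadraticSpan f R s t) :
    (Subring.closure S : Set A) ⊆ biquadraticSpan f R s t :=
  let B : Subring A :=
    { carrier := biquadraticSpan f R s t
      add_mem' := add_mem_biquadraticSpan
      mul_mem' := mul_mem_biquadraticSpan hp hq hs ht
      neg_mem' := neg_mem_biquadraticSpan
      zero_mem' := by simpa using map_mem_biquadraticSpan (f := f) (s := s) (t := t) R.zero_mem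
      one_mem' := by simpa using map_mem_biquadraticSpan (f := f) (s := s) (t := t) R.one_mem }
  (Subring.closure_le (t := B)).2 hS

lemma biquadraticSpan_subset {T : Subring A} (hR : R ≤ T.comap f) (hs : s ∈ T) (ht : t ∈ T) :
    biquadraticSpan f R s t ⊆ T := by
  rintro _ ⟨a, b, c, d, ha, hb, hc, hd, rfl⟩
  have := hR ha; have := hR hb; have := hR hc; have := hR hd
  repeat first | refine T.add_mem ?_ ?_ | refine T.mul_mem ?_ ?_ | assumption

end BiquadraticSpan

lemma ofReal_sqrt_two_mul_self : (Real.sqrt 2 : ℂ) * Real.sqrt 2 = 2 := by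
  rw [← Complex.ofReal_mul, Real.mul_self_sqrt zero_le_two, Complex.ofReal_ofNat]

lemma inv_ofReal_sqrt_two : (Real.sqrt 2 : ℂ)⁻¹ = 2⁻¹ * Real.sqrt 2 := by
  have h₀ : (Real.sqrt 2 : ℂ) ≠ 0 := by simp
  field_simp
  rw [sq, ofReal_sqrt_two_mul_self]

theorem subring_closure_inv_sqrt2_I :
    (Subring.closure ({((Real.sqrt 2 : ℂ))⁻¹, Complex.I} : Set ℂ) : Set ℂ) =
      {z : ℂ | ∃ a b c d : ℝ, IsDyadic a ∧ IsDyadic b ∧ IsDyadic c ∧ IsDyadic d ∧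
        z = (a : ℂ) + (b : ℂ) * Complex.I + (c : ℂ) * (Real.sqrt 2 : ℂ) +
            (d : ℂ) * Complex.I * (Real.sqrt 2 : ℂ)} := by
  set S := Subring.closure ({((Real.sqrt 2 : ℂ))⁻¹, Complex.I} : Set ℂ)
  change (S : Set ℂ) =
    biquadraticSpan Complex.ofRealHom dyadicSubring (Real.sqrt 2 : ℂ) Complex.I
  apply subset_antisymm
  · refine closure_subset_biquadraticSpan (R := dyadicSubring) (p := 2) (q := -1)
      ⟨2, 0, by norm_num⟩ ⟨-1, 0, by norm_num⟩ (by simpa using ofReal_sqrt_two_mul_self)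
      (by simp) ?_
    rw [Set.insert_subset_iff, Set.singleton_subset_iff, inv_ofReal_sqrt_two]
    refine ⟨?_, snd_mem_biquadraticSpan⟩
    simpa using map_mul_fst_mem_biquadraticSpan (f := Complex.ofRealHom) (t := Complex.I)
      (s := (Real.sqrt 2 : ℂ)) inv_two_mem_dyadicSubring
  · have hinv : (Real.sqrt 2 : ℂ)⁻¹ ∈ S := Subring.subset_closure (Set.mem_insert _ _)
    refine biquadraticSpan_subset (dyadicSubring_le_comap _ ?_) ?_
      (Subring.subset_closure (Set.mem_insert_of_mem _ rfl))
    · convert S.mul_mem hinv hinv using 1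
      rw [← mul_inv, ofReal_sqrt_two_mul_self, map_inv₀, map_ofNat]
    · convert S.mul_mem (ofNat_mem S 2) hinv using 1
      rw [inv_ofReal_sqrt_two]
      ring
end

section
/- Let α be any element of {2, −2, 2i, −2i, √2 + i√2, √2 − i√2, −√2 + i√2, −√2 − i√2}, and let a, b, c, d, a', b', c', d' be integers such that α·(a + b·i + c·√2 + d·i·√2) = a' + b'·i + c'·√2 + d'·i·√2 in ℂ. Then a'² + b'² + 2c'² + 2d'² = 4·(a² + b² + 2c² + 2d²). That is, for the norm ‖a + b·i + c·√2 + d·i·√2‖ = √(a² + b² + 2c² + 2d²), multiplication by α doubles the norm. -/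
lemma sqrt2_coeffs {p q r s : ℤ} (h : (p:ℝ) + q * Real.sqrt 2 = r + s * Real.sqrt 2) :
    p = r ∧ q = s := by
  by_cases hqs : q = s
  · subst hqs
    refine ⟨?_, rfl⟩
    have : (p:ℝ) = r := by linarith
    exact_mod_cast this
  · exfalso
    have hne : ((s:ℝ) - q) ≠ 0 := by
      have : ((s - q : ℤ) : ℝ) ≠ 0 := by exact_mod_cast sub_ne_zero.mpr (Ne.symm hqs)
      push_cast at this; exact this
    have hs : Real.sqrt 2 = ((p:ℝ) - r) / ((s:ℝ) - q) := by
      rw [eq_div_iff hne]; linear_combination -h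
    apply irrational_sqrt_two
    exact ⟨(p - r : ℚ) / (s - q : ℚ), by rw [hs]; push_cast; ring⟩

theorem norm_doubles_S1 (α : ℂ)
    (hα : α ∈ ({2, -2, 2 * Complex.I, -(2 * Complex.I),
        (Real.sqrt 2 : ℂ) + Complex.I * (Real.sqrt 2 : ℂ),
        (Real.sqrt 2 : ℂ) - Complex.I * (Real.sqrt 2 : ℂ),
        -(Real.sqrt 2 : ℂ) + Complex.I * (Real.sqrt 2 : ℂ),
        -(Real.sqrt 2 : ℂ) - Complex.I * (Real.sqrt 2 : ℂ)} : Set ℂ))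
    (a b c d a' b' c' d' : ℤ)
    (h : α * ((a : ℂ) + (b : ℂ) * Complex.I + (c : ℂ) * (Real.sqrt 2 : ℂ) +
            (d : ℂ) * Complex.I * (Real.sqrt 2 : ℂ)) =
        (a' : ℂ) + (b' : ℂ) * Complex.I + (c' : ℂ) * (Real.sqrt 2 : ℂ) +
            (d' : ℂ) * Complex.I * (Real.sqrt 2 : ℂ)) :
    a' ^ 2 + b' ^ 2 + 2 * c' ^ 2 + 2 * d' ^ 2 =
      4 * (a ^ 2 + b ^ 2 + 2 * c ^ 2 + 2 * d ^ 2) := by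
  have hre := congrArg Complex.re h
  have him := congrArg Complex.im h
  simp only [Set.mem_insert_iff, Set.mem_singleton_iff] at hα
  have s22 : Real.sqrt 2 * Real.sqrt 2 = 2 := Real.mul_self_sqrt (by norm_num)
  rcases hα with rfl|rfl|rfl|rfl|rfl|rfl|rfl|rfl <;>
      simp only [Complex.ext_iff, Complex.add_re, Complex.add_im, Complex.sub_re,
        Complex.sub_im, Complex.neg_re, Complex.neg_im, Complex.mul_re, Complex.mul_im,
        Complex.I_re, Complex.I_im, Complex.ofReal_re, Complex.ofReal_im,
        Complex.intCast_re, Complex.intCast_im, Complex.re_ofNat, Complex.im_ofNat] at hre him <;>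
      ring_nf at hre him <;>
      (try simp only [Real.sq_sqrt (by norm_num : (0:ℝ) ≤ 2)] at hre him)
  · obtain ⟨ha, hc⟩ := sqrt2_coeffs (p := 2*a) (q := 2*c) (r := a') (s := c')
      (by push_cast; linear_combination hre)
    obtain ⟨hb, hd⟩ := sqrt2_coeffs (p := 2*b) (q := 2*d) (r := b') (s := d')
      (by push_cast; linear_combination him)
    rw [← ha, ← hb, ← hc, ← hd]; ring
  · obtain ⟨ha, hc⟩ := sqrt2_coeffs (p := -(2*a)) (q := -(2*c)) (r := a') (s := c')
      (by push_cast; linear_combination hre)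
    obtain ⟨hb, hd⟩ := sqrt2_coeffs (p := -(2*b)) (q := -(2*d)) (r := b') (s := d')
      (by push_cast; linear_combination him)
    rw [← ha, ← hb, ← hc, ← hd]; ring
  · obtain ⟨ha, hc⟩ := sqrt2_coeffs (p := -(2*b)) (q := -(2*d)) (r := a') (s := c')
      (by push_cast; linear_combination hre)
    obtain ⟨hb, hd⟩ := sqrt2_coeffs (p := 2*a) (q := 2*c) (r := b') (s := d')
      (by push_cast; linear_combination him)
    rw [← ha, ← hb, ← hc, ← hd]; ring
  · obtain ⟨ha, hc⟩ := sqrt2_coeffs (p := 2*b) (q := 2*d) (r := a') (s := c')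
      (by push_cast; linear_combination hre)
    obtain ⟨hb, hd⟩ := sqrt2_coeffs (p := -(2*a)) (q := -(2*c)) (r := b') (s := d')
      (by push_cast; linear_combination him)
    rw [← ha, ← hb, ← hc, ← hd]; ring
  · obtain ⟨ha, hc⟩ := sqrt2_coeffs (p := 2*c-2*d) (q := a-b) (r := a') (s := c')
      (by push_cast; linear_combination hre)
    obtain ⟨hb, hd⟩ := sqrt2_coeffs (p := 2*c+2*d) (q := a+b) (r := b') (s := d')
      (by push_cast; linear_combination him)
    rw [← ha, ← hb, ← hc, ← hd]; ring
  · obtain ⟨ha, hc⟩ := sqrt2_coeffs (p := 2*c+2*d) (q := a+b) (r := a') (s := c')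
      (by push_cast; linear_combination hre)
    obtain ⟨hb, hd⟩ := sqrt2_coeffs (p := 2*d-2*c) (q := b-a) (r := b') (s := d')
      (by push_cast; linear_combination him)
    rw [← ha, ← hb, ← hc, ← hd]; ring
  · obtain ⟨ha, hc⟩ := sqrt2_coeffs (p := -(2*c+2*d)) (q := -(a+b)) (r := a') (s := c')
      (by push_cast; linear_combination hre)
    obtain ⟨hb, hd⟩ := sqrt2_coeffs (p := 2*c-2*d) (q := a-b) (r := b') (s := d')
      (by push_cast; linear_combination him)
    rw [← ha, ← hb, ← hc, ← hd]; ring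
  · obtain ⟨ha, hc⟩ := sqrt2_coeffs (p := 2*d-2*c) (q := b-a) (r := a') (s := c')
      (by push_cast; linear_combination hre)
    obtain ⟨hb, hd⟩ := sqrt2_coeffs (p := -(2*c+2*d)) (q := -(a+b)) (r := b') (s := d')
      (by push_cast; linear_combination him)
    rw [← ha, ← hb, ← hc, ← hd]; ring
end

section
/- Let z be a complex number with |z| = 1 such that there exist integers a, b, c, d with 2z = a + b·i + c·√2 + d·i·√2. Then z⁸ = 1, i.e. z = e^{i·k·π/4} for some integer k. In other words, the only global phases z with 2z ∈ ℤ[√2, i] are the integer multiples of the phase e^{iπ/4}. -/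
/-!
Write `2z = (a + c√2) + (b + d√2) i`. Expanding `|2z|² = 4` and using the irrationality of `√2`
gives `a² + b² + 2c² + 2d² = 4` and `ac + bd = 0`, whose only integer solutions are
`c = d = 0` with `a + b i ∈ {±2, ±2i}`, or `a = b = 0` with `c, d = ±1`. In the first case
`(2z)⁴ = 16`, in the second `(2z)⁴ = -16`; either way `(2z)⁸ = 256`.
-/

open Complex

theorem Irrational.eq_zero_and_eq_of_intCast_add_intCast_mul {x : ℝ} (hx : Irrational x)
    {m n k : ℤ} (h : (m : ℝ) + n * x = k) : n = 0 ∧ m = k := by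
  have hn : n = 0 := by
    by_contra hn
    exact ((hx.intCast_mul hn).intCast_add m).ne_int k h
  subst hn
  exact ⟨rfl, by exact_mod_cast (by simpa using h : (m : ℝ) = k)⟩

theorem sq_add_sq_add_two_mul_eq_four_of_norm_eq_one {z : ℂ} (hz : ‖z‖ = 1) {a b c d : ℤ}
    (h : 2 * z = (a : ℂ) + (b : ℂ) * I + (c : ℂ) * (Real.sqrt 2 : ℂ) +
      (d : ℂ) * I * (Real.sqrt 2 : ℂ)) :
    a ^ 2 + b ^ 2 + 2 * c ^ 2 + 2 * d ^ 2 = 4 ∧ a * c + b * d = 0 := by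
  have hre : 2 * z.re = a + c * Real.sqrt 2 := by simpa using congrArg re h
  have him : 2 * z.im = b + d * Real.sqrt 2 := by simpa using congrArg im h
  have hsum : z.re ^ 2 + z.im ^ 2 = 1 := by
    linear_combination (‖z‖ + 1) * hz - sq_norm_sub_sq_re z
  have hsqrt : Real.sqrt 2 ^ 2 = 2 := Real.sq_sqrt zero_le_two
  have key : ((a ^ 2 + b ^ 2 + 2 * c ^ 2 + 2 * d ^ 2 : ℤ) : ℝ)
      + ((2 * (a * c + b * d) : ℤ) : ℝ) * Real.sqrt 2 = (4 : ℤ) := by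
    push_cast
    linear_combination 4 * hsum - (2 * z.re + a + c * Real.sqrt 2) * hre
      - (2 * z.im + b + d * Real.sqrt 2) * him - (c ^ 2 + d ^ 2) * hsqrt
  obtain ⟨hcross, hquad⟩ := irrational_sqrt_two.eq_zero_and_eq_of_intCast_add_intCast_mul key
  exact ⟨hquad, by omega⟩

theorem Int.solutions_of_sq_add_sq_add_two_mul_eq_four {a b c d : ℤ}
    (hquad : a ^ 2 + b ^ 2 + 2 * c ^ 2 + 2 * d ^ 2 = 4) (hcross : a * c + b * d = 0) :
    (c = 0 ∧ d = 0 ∧ a * b = 0 ∧ a ^ 2 + b ^ 2 = 4) ∨ (a = 0 ∧ b = 0 ∧ c ^ 2 = 1 ∧ d ^ 2 = 1) := by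
  obtain ⟨ha₁, ha₂⟩ : -2 ≤ a ∧ a ≤ 2 := ⟨by nlinarith, by nlinarith⟩
  obtain ⟨hb₁, hb₂⟩ : -2 ≤ b ∧ b ≤ 2 := ⟨by nlinarith, by nlinarith⟩
  obtain ⟨hc₁, hc₂⟩ : -1 ≤ c ∧ c ≤ 1 := ⟨by nlinarith, by nlinarith⟩
  obtain ⟨hd₁, hd₂⟩ : -1 ≤ d ∧ d ≤ 1 := ⟨by nlinarith, by nlinarith⟩
  interval_cases a <;> interval_cases b <;> interval_cases c <;> interval_cases d <;> omega

theorem gaussian_int_pow_four_eq_sixteen {a b : ℤ} (hab : a * b = 0) (hnorm : a ^ 2 + b ^ 2 = 4) :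
    ((a : ℂ) + b * I) ^ 4 = 16 := by
  have hab' : (a : ℂ) * b = 0 := by exact_mod_cast hab
  have hnorm' : (a : ℂ) ^ 2 + b ^ 2 = 4 := by exact_mod_cast hnorm
  have hsq : ((a : ℂ) + b * I) ^ 2 = a ^ 2 - b ^ 2 := by
    linear_combination b ^ 2 * I_sq + 2 * I * hab'
  rw [show ((a : ℂ) + b * I) ^ 4 = (((a : ℂ) + b * I) ^ 2) ^ 2 by ring, hsq]
  linear_combination (a ^ 2 + b ^ 2 + 4 : ℂ) * hnorm' - 4 * (a * b) * hab'

theorem sqrt_two_mul_gaussian_int_pow_four_eq_neg_sixteen {c d : ℤ} (hc : c ^ 2 = 1)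
    (hd : d ^ 2 = 1) :
    ((c : ℂ) * (Real.sqrt 2 : ℂ) + d * I * (Real.sqrt 2 : ℂ)) ^ 4 = -16 := by
  have hc' : (c : ℂ) ^ 2 = 1 := by exact_mod_cast hc
  have hd' : (d : ℂ) ^ 2 = 1 := by exact_mod_cast hd
  have hsqrt : (Real.sqrt 2 : ℂ) ^ 2 = 2 := by exact_mod_cast Real.sq_sqrt zero_le_two
  have hsq : ((c : ℂ) * (Real.sqrt 2 : ℂ) + d * I * (Real.sqrt 2 : ℂ)) ^ 2 = 4 * c * d * I := by
    linear_combination (c + d * I) ^ 2 * hsqrt + 2 * d ^ 2 * I_sq + 2 * hc' - 2 * hd'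
  rw [show ((c : ℂ) * (Real.sqrt 2 : ℂ) + d * I * (Real.sqrt 2 : ℂ)) ^ 4
      = (((c : ℂ) * (Real.sqrt 2 : ℂ) + d * I * (Real.sqrt 2 : ℂ)) ^ 2) ^ 2 by ring, hsq]
  linear_combination 16 * c ^ 2 * d ^ 2 * I_sq - 16 * d ^ 2 * hc' - 16 * hd'

theorem phase_in_Zsqrt2i_is_eighth_root (z : ℂ)
    (hz : ‖z‖ = 1)
    (h : ∃ a b c d : ℤ,
      2 * z = (a : ℂ) + (b : ℂ) * Complex.I + (c : ℂ) * (Real.sqrt 2 : ℂ) +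
        (d : ℂ) * Complex.I * (Real.sqrt 2 : ℂ)) :
    z ^ 8 = 1 := by
  obtain ⟨a, b, c, d, h⟩ := h
  obtain ⟨hquad, hcross⟩ := sq_add_sq_add_two_mul_eq_four_of_norm_eq_one hz h
  have h4 : (2 * z) ^ 4 = 16 ∨ (2 * z) ^ 4 = -16 := by
    rcases Int.solutions_of_sq_add_sq_add_two_mul_eq_four hquad hcross with
      ⟨rfl, rfl, hab, hnorm⟩ | ⟨rfl, rfl, hc, hd⟩
    · left
      simpa [h] using gaussian_int_pow_four_eq_sixteen hab hnorm
    · right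
      simpa [h] using sqrt_two_mul_gaussian_int_pow_four_eq_neg_sixteen hc hd
  have h8 : (2 * z) ^ 8 = 256 := by
    rcases h4 with h4 | h4 <;> rw [show (2 * z) ^ 8 = ((2 * z) ^ 4) ^ 2 by ring, h4] <;> norm_num
  linear_combination h8 / 256
end
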